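/- arXiv:2108.00767 — 6 statements merged into one kernel-verified Lean document; each statement's English description precedes it below -/
import Mathlib

section
/- Let g : ℝ^d → ℝ be a nonnegative integrable function with finite second moment and with g^(1+2/d) integrable. Then (∫ g dx)^(2+2/d) ≤ c_d · (∫ g(x)|x|² dx) · (∫ g(x)^(1+2/d) dx) for a constant c_d depending only on d. -/
/-!
Pointwise, `g ≤ g ‖x‖² / R² + λ^(-p) g^(1+p) + λ 𝟙_{‖x‖ ≤ R}`: off the ball by Chebyshev,
on the ball because either `g ≤ λ` or `g^p ≥ λ^p`. Integrating gives
`∫ g ≤ A / R² + λ^(-p) B + λ ω R^d`, where `A = ∫ g ‖x‖²`, `B = ∫ g^(1+p)` and `ω` is the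
measure of the unit ball. Choosing `R` and `λ` so that the first two terms are both `(∫ g) / 4`
yields the inequality with `p = 2/d` and `c_d = 16 (2ω)^(2/d)`.
-/

open MeasureTheory Metric Module

theorem le_rpow_neg_mul_rpow_one_add_add {t lam p : ℝ} (ht : 0 ≤ t) (hlam : 0 < lam)
    (hp : 0 ≤ p) : t ≤ lam ^ (-p) * t ^ (1 + p) + lam := by
  rcases le_or_gt t lam with htl | hlt
  · have : 0 ≤ lam ^ (-p) * t ^ (1 + p) := by positivity
    linarith
  · have hone : 1 ≤ lam ^ (-p) * t ^ p :=
      calc 1 = lam ^ (-p) * lam ^ p := by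
            rw [← Real.rpow_add hlam, neg_add_cancel, Real.rpow_zero]
        _ ≤ lam ^ (-p) * t ^ p := by gcongr
    calc t ≤ t * (lam ^ (-p) * t ^ p) := le_mul_of_one_le_right ht hone
      _ = lam ^ (-p) * t ^ (1 + p) := by rw [Real.rpow_add (hlam.trans hlt), Real.rpow_one]; ring
      _ ≤ _ := by linarith

theorem le_mul_norm_sq_div_add_rpow_add_indicator {E : Type*} [SeminormedAddCommGroup E]
    {t R lam p : ℝ} (x : E) (ht : 0 ≤ t) (hR : 0 < R) (hlam : 0 < lam) (hp : 0 ≤ p) :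
    t ≤ t * ‖x‖ ^ 2 / R ^ 2 + lam ^ (-p) * t ^ (1 + p) +
      (closedBall (0 : E) R).indicator (fun _ => lam) x := by
  by_cases hx : x ∈ closedBall (0 : E) R
  · rw [Set.indicator_of_mem hx]
    have := le_rpow_neg_mul_rpow_one_add_add ht hlam hp
    have : 0 ≤ t * ‖x‖ ^ 2 / R ^ 2 := by positivity
    linarith
  · rw [Set.indicator_of_notMem hx]
    have hRx : R < ‖x‖ := by simpa using hx
    have : t ≤ t * ‖x‖ ^ 2 / R ^ 2 := by
      rw [le_div_iff₀ (by positivity)]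
      gcongr
    have : 0 ≤ lam ^ (-p) * t ^ (1 + p) := by positivity
    linarith

theorem integral_le_moment_div_add_rpow_add_measureReal_closedBall {E : Type*}
    [SeminormedAddCommGroup E] [MeasurableSpace E] [OpensMeasurableSpace E] {μ : Measure E}
    {g : E → ℝ} {R lam p : ℝ} (hR : 0 < R) (hlam : 0 < lam) (hp : 0 ≤ p)
    (hball : μ (closedBall 0 R) ≠ ⊤) (hg : ∀ x, 0 ≤ g x) (hg_int : Integrable g μ)
    (hmom : Integrable (fun x => g x * ‖x‖ ^ 2) μ)
    (hpow : Integrable (fun x => g x ^ (1 + p)) μ) :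
    ∫ x, g x ∂μ ≤ (∫ x, g x * ‖x‖ ^ 2 ∂μ) / R ^ 2 +
      lam ^ (-p) * ∫ x, g x ^ (1 + p) ∂μ + lam * μ.real (closedBall 0 R) := by
  have hmom' : Integrable (fun x => g x * ‖x‖ ^ 2 / R ^ 2) μ := hmom.div_const _
  have hpow' : Integrable (fun x => lam ^ (-p) * g x ^ (1 + p)) μ := hpow.const_mul _
  have hsum : Integrable (fun x => g x * ‖x‖ ^ 2 / R ^ 2 + lam ^ (-p) * g x ^ (1 + p)) μ :=
    hmom'.add hpow'
  have hind : Integrable ((closedBall (0 : E) R).indicator fun _ => lam) μ :=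
    (integrable_indicator_iff measurableSet_closedBall).2 (integrableOn_const hball)
  calc ∫ x, g x ∂μ
      ≤ ∫ x, (g x * ‖x‖ ^ 2 / R ^ 2 + lam ^ (-p) * g x ^ (1 + p) +
          (closedBall (0 : E) R).indicator (fun _ => lam) x) ∂μ :=
        integral_mono hg_int (hsum.add hind) fun x =>
          le_mul_norm_sq_div_add_rpow_add_indicator x (hg x) hR hlam hp
    _ = _ := by
      rw [integral_add hsum hind, integral_add hmom' hpow', integral_div,
        integral_const_mul, integral_indicator_const _ measurableSet_closedBall, smul_eq_mul,
        mul_comm (μ.real _)]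

theorem rpow_two_add_le_of_forall_le {d : ℕ} {p ω I A B : ℝ} (hp : 0 < p) (hpd : d * p = 2)
    (hω : 0 ≤ ω) (hI : 0 < I) (hA : 0 < A) (hB : 0 < B)
    (h : ∀ R lam : ℝ, 0 < R → 0 < lam →
      I ≤ A / R ^ 2 + lam ^ (-p) * B + lam * (R ^ d * ω)) :
    I ^ (2 + p) ≤ 16 * (2 * ω) ^ p * A * B := by
  set R := √(4 * A / I)
  set lam := (4 * B / I) ^ p⁻¹
  have hR : R ^ 2 = 4 * A / I := Real.sq_sqrt (by positivity)
  have hlam : lam ^ p = 4 * B / I := Real.rpow_inv_rpow (by positivity) hp.ne'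
  have hA4 : A / R ^ 2 = I / 4 := by rw [hR]; field_simp
  have hB4 : lam ^ (-p) * B = I / 4 := by rw [Real.rpow_neg (by positivity), hlam]; field_simp
  have hhalf : I / 2 ≤ lam * R ^ d * ω := by
    have := h R lam (Real.sqrt_pos.2 (by positivity)) (by positivity)
    rw [hA4, hB4] at this
    linarith
  -- `d * p = 2` is what makes `(λ R^d)^p = λ^p R²` scale like `A * B / I²`.
  have hRd : (R ^ d) ^ p = R ^ 2 := by
    rw [← Real.rpow_natCast, ← Real.rpow_mul (Real.sqrt_nonneg _), hpd, Real.rpow_two]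
  have hhalf_p : (I / 2) ^ p ≤ lam ^ p * (R ^ d) ^ p * ω ^ p := by
    rw [← Real.mul_rpow (by positivity) (by positivity),
      ← Real.mul_rpow (by positivity) hω]
    exact Real.rpow_le_rpow (by positivity) hhalf hp.le
  calc I ^ (2 + p) = 2 ^ p * I ^ 2 * (I / 2) ^ p := by
        rw [Real.rpow_add hI, Real.div_rpow hI.le zero_le_two, Real.rpow_two]
        field_simp
    _ ≤ 2 ^ p * I ^ 2 * (lam ^ p * (R ^ d) ^ p * ω ^ p) := by gcongr
    _ = 16 * (2 * ω) ^ p * A * B := by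
        rw [hlam, hRd, hR, Real.mul_rpow zero_le_two hω]
        field_simp
        ring

theorem integral_mul_norm_sq_pos {E : Type*} [NormedAddCommGroup E] [MeasurableSpace E]
    {μ : Measure E} [NullSingletonClass μ] {g : E → ℝ} (hg : ∀ x, 0 ≤ g x)
    (hg_int : Integrable g μ) (hmom : Integrable (fun x => g x * ‖x‖ ^ 2) μ)
    (hpos : 0 < ∫ x, g x ∂μ) : 0 < ∫ x, g x * ‖x‖ ^ 2 ∂μ := by
  have hsupp : Function.support (fun x => g x * ‖x‖ ^ 2) = Function.support g \ {0} := by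
    ext x; simp [and_comm]
  rw [integral_pos_iff_support_of_nonneg (fun x => mul_nonneg (hg x) (by positivity)) hmom,
    hsupp, measure_sdiff_null (measure_singleton 0)]
  rwa [integral_pos_iff_support_of_nonneg hg hg_int] at hpos

theorem integral_rpow_pos {α : Type*} [MeasurableSpace α] {μ : Measure α} {g : α → ℝ}
    {q : ℝ} (hq : q ≠ 0) (hg : ∀ x, 0 ≤ g x) (hg_int : Integrable g μ)
    (hpow : Integrable (fun x => g x ^ q) μ) (hpos : 0 < ∫ x, g x ∂μ) :
    0 < ∫ x, g x ^ q ∂μ := by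
  have hsupp : Function.support (fun x => g x ^ q) = Function.support g := by
    ext x; simp [Real.rpow_eq_zero_iff_of_nonneg (hg x), hq]
  rw [integral_pos_iff_support_of_nonneg (fun x => Real.rpow_nonneg (hg x) q) hpow, hsupp]
  rwa [integral_pos_iff_support_of_nonneg hg hg_int] at hpos

theorem integral_rpow_two_add_two_div_finrank_le {E : Type*} [NormedAddCommGroup E]
    [NormedSpace ℝ E] [FiniteDimensional ℝ E] [Nontrivial E] [MeasurableSpace E] [BorelSpace E]
    (μ : Measure E) [μ.IsAddHaarMeasure] {g : E → ℝ} (hg : ∀ x, 0 ≤ g x)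
    (hg_int : Integrable g μ) (hmom : Integrable (fun x => g x * ‖x‖ ^ 2) μ)
    (hpow : Integrable (fun x => g x ^ ((1 : ℝ) + 2 / finrank ℝ E)) μ) :
    (∫ x, g x ∂μ) ^ ((2 : ℝ) + 2 / finrank ℝ E) ≤
      16 * (2 * μ.real (ball 0 1)) ^ ((2 : ℝ) / finrank ℝ E) *
        (∫ x, g x * ‖x‖ ^ 2 ∂μ) * ∫ x, g x ^ ((1 : ℝ) + 2 / finrank ℝ E) ∂μ := by
  have hd : (0 : ℝ) < finrank ℝ E := by exact_mod_cast finrank_pos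
  have hp : (0 : ℝ) < 2 / finrank ℝ E := by positivity
  have hI0 : 0 ≤ ∫ x, g x ∂μ := integral_nonneg hg
  rcases hI0.eq_or_lt with hI | hI
  · rw [← hI, Real.zero_rpow (by positivity)]
    have : 0 ≤ ∫ x, g x * ‖x‖ ^ 2 ∂μ :=
      integral_nonneg fun x => mul_nonneg (hg x) (by positivity)
    have : 0 ≤ ∫ x, g x ^ ((1 : ℝ) + 2 / finrank ℝ E) ∂μ :=
      integral_nonneg fun x => Real.rpow_nonneg (hg x) _
    positivity
  refine rpow_two_add_le_of_forall_le hp (by field_simp) measureReal_nonneg hI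
    (integral_mul_norm_sq_pos hg hg_int hmom hI)
    (integral_rpow_pos (by positivity) hg hg_int hpow hI)
    fun R lam hR hlam => ?_
  rw [← Measure.addHaar_real_closedBall μ 0 hR.le]
  exact integral_le_moment_div_add_rpow_add_measureReal_closedBall hR hlam hp.le
    measure_closedBall_lt_top.ne hg hg_int hmom hpow

/-- For nonnegative integrable `g` on `ℝ^d` with finite second moment and with
`g^(1+2/d)` integrable, `(∫ g)^(2+2/d) ≤ c_d (∫ g |x|²)(∫ g^(1+2/d))`. -/
theorem uncertainty_one_point (d : ℕ) (hd : 1 ≤ d) :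
    ∃ C : ℝ, 0 < C ∧ ∀ g : EuclideanSpace ℝ (Fin d) → ℝ,
      (∀ x, 0 ≤ g x) → Integrable g →
      Integrable (fun x => g x * ‖x‖ ^ 2) →
      Integrable (fun x => g x ^ ((1 : ℝ) + 2 / d)) →
      (∫ x, g x) ^ ((2 : ℝ) + 2 / d) ≤
        C * (∫ x, g x * ‖x‖ ^ 2) * ∫ x, g x ^ ((1 : ℝ) + 2 / d) := by
  have : Nonempty (Fin d) := ⟨⟨0, hd⟩⟩
  have hω : 0 < volume.real (ball (0 : EuclideanSpace ℝ (Fin d)) 1) :=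
    ENNReal.toReal_pos (measure_ball_pos volume 0 one_pos).ne' measure_ball_lt_top.ne
  refine ⟨16 * (2 * volume.real (ball (0 : EuclideanSpace ℝ (Fin d)) 1)) ^ ((2 : ℝ) / d),
    by positivity, fun g hg hg_int hmom hpow => ?_⟩
  have h := integral_rpow_two_add_two_div_finrank_le volume (g := g) hg hg_int hmom
  simp only [finrank_euclideanSpace_fin] at h
  exact h hpow
end

section
/- Let g : ℝ^d → ℝ be nonnegative and integrable with finite second moment, with g^(1+2/d) also integrable. Then (∫ g dx)^(3+2/d) ≤ c_d · (∫∫ g(x)g(x')|x'−x|² dx dx') · (∫ g^(1+2/d) dx) for a constant c_d depending only on d. -/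
/-!
Fix `x` and `r > 0` and split the mass `M = ∫ g` at the ball `B(x, r)`. Hölder's inequality with
exponents `p = 1 + 2/d` and `q = 1 + d/2` bounds the mass inside the ball by
`‖g‖_p |B(x, r)|^{1/q} ∝ r^{d/q}`, and Chebyshev's inequality bounds the mass outside by
`r⁻² ∫ g(x') |x' - x|² dx'`. Multiplying by `g x` and integrating in `x` gives
`M² ≤ A r^{d/q} M + r⁻² I` for every `r`, where `I` is the double integral; choosing `r` so
that the first term is `M² / 2` yields the inequality, since `2 / (d/q) = p`.
-/

open MeasureTheory Metric Module

lemma rpow_le_of_forall_sq_le_mul_rpow_add_div {M A I a : ℝ} (hM : 0 < M) (hA : 0 < A)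
    (ha : 0 < a) (h : ∀ r : ℝ, 0 < r → M ^ 2 ≤ A * r ^ a * M + I / r ^ 2) :
    M ^ (2 + 2 / a) ≤ 2 ^ (1 + 2 / a) * A ^ (2 / a) * I := by
  -- `r = b ^ a⁻¹` makes the first term on the right `M² / 2`.
  set b := M / (2 * A)
  have hb : 0 < b := by positivity
  have hr : 0 < b ^ a⁻¹ := by positivity
  have hr2 : (b ^ a⁻¹) ^ 2 = b ^ (2 / a) := by
    rw [← Real.rpow_natCast, ← Real.rpow_mul hb.le, Nat.cast_ofNat, inv_mul_eq_div]
  have hAbM : A * b * M = M ^ 2 / 2 := by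
    simp only [b]
    field_simp
  have hrb : M ^ 2 * b ^ (2 / a) ≤ 2 * I := by
    have := h _ hr
    rw [Real.rpow_inv_rpow hb.le ha.ne', hAbM, hr2] at this
    have half : M ^ 2 / 2 ≤ I / b ^ (2 / a) := by linarith
    rw [le_div_iff₀ (by positivity)] at half
    linarith
  rw [Real.div_rpow hM.le (by positivity), Real.mul_rpow zero_le_two hA.le, mul_div_assoc',
    div_le_iff₀ (by positivity)] at hrb
  rw [Real.rpow_add hM, Real.rpow_add two_pos, Real.rpow_two, Real.rpow_one]
  linarith

lemma norm_sub_sq_le {E : Type*} [SeminormedAddCommGroup E] (x y : E) :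
    ‖y - x‖ ^ 2 ≤ 2 * ‖y‖ ^ 2 + 2 * ‖x‖ ^ 2 := by
  nlinarith [norm_sub_le y x, norm_nonneg (y - x), sq_nonneg (‖y‖ - ‖x‖)]

lemma measureReal_ball_pos {E : Type*} [PseudoMetricSpace E] [ProperSpace E] [MeasurableSpace E]
    (μ : Measure E) [μ.IsOpenPosMeasure] [IsFiniteMeasureOnCompacts μ] (x : E) {r : ℝ}
    (hr : 0 < r) : 0 < μ.real (ball x r) :=
  ENNReal.toReal_pos (measure_ball_pos μ x hr).ne' measure_ball_lt_top.ne

section Holder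

variable {α : Type*} [MeasurableSpace α] {μ : Measure α} {g : α → ℝ}

lemma memLp_ofReal_of_integrable_rpow {p : ℝ} (hp : 0 < p) (hg0 : ∀ x, 0 ≤ g x)
    (hg : AEStronglyMeasurable g μ) (hgp : Integrable (fun x => g x ^ p) μ) :
    MemLp g (ENNReal.ofReal p) μ := by
  rw [← integrable_norm_rpow_iff hg (by simpa using hp) ENNReal.ofReal_ne_top,
    ENNReal.toReal_ofReal hp.le]
  simpa only [Real.norm_of_nonneg (hg0 _)] using hgp

lemma setIntegral_le_integral_rpow_mul_measureReal {p q : ℝ} (hpq : p.HolderConjugate q)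
    (hg0 : ∀ x, 0 ≤ g x) (hg : AEStronglyMeasurable g μ) (hgp : Integrable (fun x => g x ^ p) μ)
    {s : Set α} (hμs : μ s ≠ ⊤) :
    ∫ x in s, g x ∂μ ≤ (∫ x, g x ^ p ∂μ) ^ (1 / p) * μ.real s ^ (1 / q) := by
  have : IsFiniteMeasure (μ.restrict s) := isFiniteMeasure_restrict.2 hμs
  have holder := integral_mul_le_Lp_mul_Lq_of_nonneg hpq (ae_of_all _ hg0)
    (ae_of_all _ fun _ => zero_le_one)
    ((memLp_ofReal_of_integrable_rpow hpq.pos hg0 hg hgp).restrict s)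
    (memLp_const (1 : ℝ))
  simp only [mul_one, Real.one_rpow, integral_const, smul_eq_mul, measureReal_restrict_apply_univ]
    at holder
  refine holder.trans (mul_le_mul_of_nonneg_right ?_ (by positivity))
  have hgp0 : ∀ x, 0 ≤ g x ^ p := fun x => Real.rpow_nonneg (hg0 x) p
  exact Real.rpow_le_rpow (integral_nonneg hgp0) (setIntegral_le_integral hgp (ae_of_all _ hgp0))
    (by have := hpq.pos; positivity)

lemma integral_rpow_pos_of_integral_pos {p : ℝ} (hp : 0 < p) (hg0 : ∀ x, 0 ≤ g x)
    (hg : Integrable g μ) (hgp : Integrable (fun x => g x ^ p) μ) (h : 0 < ∫ x, g x ∂μ) :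
    0 < ∫ x, g x ^ p ∂μ := by
  have hsupp : Function.support (fun x => g x ^ p) = Function.support g := by
    ext x
    simp [Real.rpow_eq_zero_iff_of_nonneg (hg0 x), hp.ne']
  rw [integral_pos_iff_support_of_nonneg (fun x => Real.rpow_nonneg (hg0 x) p) hgp, hsupp]
  exact (integral_pos_iff_support_of_nonneg hg0 hg).1 h

end Holder

section SecondMoment

variable {E : Type*} [NormedAddCommGroup E] [MeasurableSpace E] {μ : Measure E} {g : E → ℝ}

lemma setIntegral_compl_ball_le_div_sq [OpensMeasurableSpace E] (hg0 : ∀ y, 0 ≤ g y)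
    (hg : Integrable g μ) {x : E} (hgx : Integrable (fun y => g y * ‖y - x‖ ^ 2) μ)
    {r : ℝ} (hr : 0 < r) :
    ∫ y in (ball x r)ᶜ, g y ∂μ ≤ (∫ y, g y * ‖y - x‖ ^ 2 ∂μ) / r ^ 2 := by
  calc ∫ y in (ball x r)ᶜ, g y ∂μ
      ≤ ∫ y in (ball x r)ᶜ, g y * ‖y - x‖ ^ 2 / r ^ 2 ∂μ := by
        refine setIntegral_mono_on hg.integrableOn (hgx.div_const _).integrableOn
          measurableSet_ball.compl fun y hy => ?_
        have hry : r ≤ ‖y - x‖ := by simpa [dist_eq_norm] using hy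
        rw [le_div_iff₀ (by positivity)]
        exact mul_le_mul_of_nonneg_left (pow_le_pow_left₀ hr.le hry 2) (hg0 y)
    _ ≤ ∫ y, g y * ‖y - x‖ ^ 2 / r ^ 2 ∂μ :=
        setIntegral_le_integral (hgx.div_const _) (ae_of_all _ fun y => by
          have := hg0 y; positivity)
    _ = (∫ y, g y * ‖y - x‖ ^ 2 ∂μ) / r ^ 2 := integral_div _ _

lemma integrable_mul_norm_sub_sq [BorelSpace E] (hg0 : ∀ y, 0 ≤ g y) (hg : Integrable g μ)
    (hg2 : Integrable (fun y => g y * ‖y‖ ^ 2) μ) (x : E) :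
    Integrable (fun y => g y * ‖y - x‖ ^ 2) μ := by
  refine Integrable.mono' ((hg2.const_mul 2).add (hg.const_mul (2 * ‖x‖ ^ 2)))
    (hg.1.mul (by fun_prop : Continuous _).aestronglyMeasurable) (ae_of_all _ fun y => ?_)
  have := hg0 y
  rw [Real.norm_of_nonneg (by positivity), Pi.add_apply]
  nlinarith [mul_le_mul_of_nonneg_left (norm_sub_sq_le x y) (hg0 y)]

lemma integrable_prod_mul_mul_norm_sub_sq [BorelSpace E] [SecondCountableTopology E] [SFinite μ]
    (hg0 : ∀ y, 0 ≤ g y) (hg : Integrable g μ) (hg2 : Integrable (fun y => g y * ‖y‖ ^ 2) μ) :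
    Integrable (fun z : E × E => g z.1 * g z.2 * ‖z.2 - z.1‖ ^ 2) (μ.prod μ) := by
  refine Integrable.mono' (((hg.mul_prod hg2).const_mul 2).add ((hg2.mul_prod hg).const_mul 2))
    ((hg.mul_prod hg).1.mul (by fun_prop : Continuous _).aestronglyMeasurable)
    (ae_of_all _ fun z => ?_)
  have h1 := hg0 z.1
  have h2 := hg0 z.2
  rw [Real.norm_of_nonneg (by positivity), Pi.add_apply]
  nlinarith [mul_le_mul_of_nonneg_left (norm_sub_sq_le z.1 z.2) (mul_nonneg h1 h2)]

end SecondMoment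

section AddHaar

variable {E : Type*} [NormedAddCommGroup E] [NormedSpace ℝ E] [FiniteDimensional ℝ E]
  [MeasurableSpace E] [BorelSpace E] {μ : Measure E} [μ.IsAddHaarMeasure] {g : E → ℝ}

lemma integral_le_mul_rpow_add_div_sq [Nontrivial E] {p q : ℝ} (hpq : p.HolderConjugate q)
    (hg0 : ∀ y, 0 ≤ g y) (hg : Integrable g μ) (hgp : Integrable (fun y => g y ^ p) μ) {x : E}
    (hgx : Integrable (fun y => g y * ‖y - x‖ ^ 2) μ) {r : ℝ} (hr : 0 < r) :
    ∫ y, g y ∂μ ≤ (∫ y, g y ^ p ∂μ) ^ (1 / p) * μ.real (ball 0 1) ^ (1 / q) *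
        r ^ (finrank ℝ E / q) + (∫ y, g y * ‖y - x‖ ^ 2 ∂μ) / r ^ 2 := by
  have hball : μ.real (ball x r) ^ (1 / q) =
      μ.real (ball 0 1) ^ (1 / q) * r ^ (finrank ℝ E / q) := by
    rw [measureReal_def, Measure.addHaar_ball μ x hr.le, ENNReal.toReal_mul,
      ENNReal.toReal_ofReal (by positivity), ← measureReal_def, mul_comm,
      Real.mul_rpow measureReal_nonneg (by positivity), ← Real.rpow_natCast_mul hr.le,
      mul_one_div]
  have hin := setIntegral_le_integral_rpow_mul_measureReal hpq hg0 hg.1 hgp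
    (measure_ball_lt_top (μ := μ) (x := x) (r := r)).ne
  rw [hball, ← mul_assoc] at hin
  rw [← integral_add_compl (measurableSet_ball (x := x) (ε := r)) hg]
  exact add_le_add hin (setIntegral_compl_ball_le_div_sq hg0 hg hgx hr)

lemma sq_integral_le_mul_rpow_add_div_sq [Nontrivial E] {p q : ℝ} (hpq : p.HolderConjugate q)
    (hg0 : ∀ y, 0 ≤ g y) (hg : Integrable g μ) (hg2 : Integrable (fun y => g y * ‖y‖ ^ 2) μ)
    (hgp : Integrable (fun y => g y ^ p) μ) {r : ℝ} (hr : 0 < r) :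
    (∫ x, g x ∂μ) ^ 2 ≤ (∫ y, g y ^ p ∂μ) ^ (1 / p) * μ.real (ball 0 1) ^ (1 / q) *
        r ^ (finrank ℝ E / q) * (∫ x, g x ∂μ) +
      (∫ x, ∫ y, g x * g y * ‖y - x‖ ^ 2 ∂μ ∂μ) / r ^ 2 := by
  set K := (∫ y, g y ^ p ∂μ) ^ (1 / p) * μ.real (ball 0 1) ^ (1 / q) * r ^ (finrank ℝ E / q)
  have hF := (integrable_prod_mul_mul_norm_sub_sq hg0 hg hg2).integral_prod_left
  have hpointwise : ∀ x,
      g x * ∫ y, g y ∂μ ≤ K * g x + (∫ y, g x * g y * ‖y - x‖ ^ 2 ∂μ) / r ^ 2 := by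
    intro x
    have hJ : ∫ y, g x * g y * ‖y - x‖ ^ 2 ∂μ = g x * ∫ y, g y * ‖y - x‖ ^ 2 ∂μ := by
      simp_rw [mul_assoc]
      exact integral_const_mul _ _
    have := mul_le_mul_of_nonneg_left (integral_le_mul_rpow_add_div_sq hpq hg0 hg hgp
      (integrable_mul_norm_sub_sq hg0 hg hg2 x) hr) (hg0 x)
    rw [hJ, mul_div_assoc]
    linarith
  calc (∫ x, g x ∂μ) ^ 2 = ∫ x, g x * ∫ y, g y ∂μ ∂μ := by rw [integral_mul_const, sq]
    _ ≤ ∫ x, K * g x + (∫ y, g x * g y * ‖y - x‖ ^ 2 ∂μ) / r ^ 2 ∂μ :=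
        integral_mono (hg.mul_const _) ((hg.const_mul K).add (hF.div_const _)) hpointwise
    _ = _ := by rw [integral_add (hg.const_mul K) (hF.div_const _), integral_const_mul,
        integral_div]

theorem integral_rpow_le_interaction_mul_integral_rpow (hd : 0 < finrank ℝ E)
    (hg0 : ∀ x, 0 ≤ g x) (hg : Integrable g μ) (hg2 : Integrable (fun x => g x * ‖x‖ ^ 2) μ)
    (hgp : Integrable (fun x => g x ^ (1 + 2 / (finrank ℝ E : ℝ))) μ) :
    (∫ x, g x ∂μ) ^ (3 + 2 / (finrank ℝ E : ℝ)) ≤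
      2 ^ (2 + 2 / (finrank ℝ E : ℝ)) * μ.real (ball 0 1) ^ (2 / (finrank ℝ E : ℝ)) *
        (∫ x, ∫ x', g x * g x' * ‖x' - x‖ ^ 2 ∂μ ∂μ) *
          ∫ x, g x ^ (1 + 2 / (finrank ℝ E : ℝ)) ∂μ := by
  have : Nontrivial E := Module.nontrivial_of_finrank_pos hd
  have hω := measureReal_ball_pos μ 0 one_pos
  have hd : (0 : ℝ) < finrank ℝ E := by exact_mod_cast hd
  set d : ℝ := (finrank ℝ E : ℝ)
  have hpq : (1 + 2 / d).HolderConjugate (1 + d / 2) :=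
    Real.holderConjugate_iff.mpr ⟨by simp [hd], by field_simp; ring⟩
  have hI : 0 ≤ ∫ x, ∫ x', g x * g x' * ‖x' - x‖ ^ 2 ∂μ ∂μ :=
    integral_nonneg fun x => integral_nonneg fun x' => by
      have := hg0 x; have := hg0 x'; positivity
  have hE0 : 0 ≤ ∫ x, g x ^ (1 + 2 / d) ∂μ :=
    integral_nonneg fun x => Real.rpow_nonneg (hg0 x) _
  rcases (integral_nonneg hg0 : 0 ≤ ∫ x, g x ∂μ).eq_or_lt with hM | hM
  · rw [← hM, Real.zero_rpow (by positivity)]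
    positivity
  have hEpos := integral_rpow_pos_of_integral_pos (by positivity) hg0 hg hgp hM
  have key := rpow_le_of_forall_sq_le_mul_rpow_add_div hM (by positivity) (by positivity)
    fun r hr => sq_integral_le_mul_rpow_add_div_sq hpq hg0 hg hg2 hgp hr
  have h2a : 2 / (d / (1 + d / 2)) = 1 + 2 / d := by field_simp; ring
  rw [h2a, Real.mul_rpow (by positivity) (by positivity), ← Real.rpow_mul hE0,
    ← Real.rpow_mul hω.le, one_div_mul_cancel (by positivity), Real.rpow_one,
    show 1 / (1 + d / 2) * (1 + 2 / d) = 2 / d by field_simp; ring] at key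
  calc (∫ x, g x ∂μ) ^ (3 + 2 / d) = (∫ x, g x ∂μ) ^ (2 + (1 + 2 / d)) := by ring_nf
    _ ≤ _ := key
    _ = _ := by ring_nf

end AddHaar

/-- Uncertainty principle: `(∫ g)^(3+2/d) ≤ c_d (∫∫ g(x)g(x')|x'-x|²)(∫ g^(1+2/d))`. -/
theorem uncertainty_principle (d : ℕ) (hd : 1 ≤ d) :
    ∃ C : ℝ, 0 < C ∧ ∀ g : EuclideanSpace ℝ (Fin d) → ℝ,
      (∀ x, 0 ≤ g x) → Integrable g →
      Integrable (fun x => g x * ‖x‖ ^ 2) →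
      Integrable (fun x => g x ^ ((1 : ℝ) + 2 / d)) →
      (∫ x, g x) ^ ((3 : ℝ) + 2 / d) ≤
        C * (∫ x, ∫ x', g x * g x' * ‖x' - x‖ ^ 2) *
          ∫ x, g x ^ ((1 : ℝ) + 2 / d) := by
  have hrank : finrank ℝ (EuclideanSpace ℝ (Fin d)) = d := finrank_euclideanSpace_fin
  have hω := measureReal_ball_pos volume (0 : EuclideanSpace ℝ (Fin d)) one_pos
  refine ⟨2 ^ ((2 : ℝ) + 2 / d) * volume.real (ball (0 : EuclideanSpace ℝ (Fin d)) 1) ^ (2 / d : ℝ),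
    by positivity, fun g hg0 hg hg2 hgp => ?_⟩
  have := integral_rpow_le_interaction_mul_integral_rpow (μ := volume) (by rw [hrank]; omega)
    hg0 hg hg2 (by rwa [hrank])
  rwa [hrank] at this
end

section
/- Let S : ℝ^(1+d) → Sym(1+d) be a C¹ symmetric-matrix-valued function, written blockwise S = [[ρ, mᵀ],[m, T]] with ρ scalar, m : ℝ^(1+d) → ℝ^d, T symmetric d×d. Suppose Div_{t,x} S = 0 (row-wise divergence). Fix α > 0 and define on the region 1+tα > 0 the change of variables s = t/(1+tα), y = x/(1+tα), and the tensor S̄ with blocks ρ̄ = (1+tα)^d ρ, m̄ = (1+tα)^{d+1} m − α(1+tα)^d ρ x, T̄ = (1+tα)^{d+2} T − α(1+tα)^{d+1}(m⊗x + x⊗m) + α²(1+tα)^d ρ x⊗x, where the right-hand sides are evaluated at (t,x) corresponding to (s,y). Then Div_{s,y} S̄ = 0. -/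
/-!
Write `Φ(w) = w / (1 - α w₀)` for the map `(s, y) ↦ (t, x)`, `z = Φ w = (t, x)` and
`a = (1 - α w₀)⁻¹ = 1 + α t`. Blockwise, `S̄(w) = a^d P(z) S(z) P(z)ᵀ` with
`P(z) = [[1, 0], [-α x, (1 + α t) I]]`, and `v ↦ a^d P(z) v` is exactly `det DΦ • DΦ⁻¹`, since
`DΦ = a (I + α z e₀ᵀ)` has determinant `a^(d+2)`. So row `i` of `S̄` is the Piola transform
under `Φ` of the field `Wᵢ = (P S)ᵢ`, and the Piola identity
`div (Piola V) = a^(d+2) (div V) ∘ Φ` reduces the claim to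
`div Wᵢ = (1 + α t) div Sᵢ - α zᵢ div S₀ + α (S_{i0} - S_{0i}) = 0`, which is where the
symmetry of `S` enters.
-/

open Matrix

/-- The projectively transformed tensor: with `a = (1 - α s)⁻¹ = 1 + t α` and
`z = a • w` the original coordinates `(t, x)`, the blocks are
`ρ̄ = a^d ρ`, `m̄ = a^(d+1) m - α a^d ρ x`,
`T̄ = a^(d+2) T - α a^(d+1) (m ⊗ x + x ⊗ m) + α² a^d ρ x ⊗ x`. -/
noncomputable def projTensor (d : ℕ) (α : ℝ)
    (S : (Fin (d + 1) → ℝ) → Matrix (Fin (d + 1)) (Fin (d + 1)) ℝ)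
    (w : Fin (d + 1) → ℝ) : Matrix (Fin (d + 1)) (Fin (d + 1)) ℝ :=
  let a : ℝ := (1 - α * w 0)⁻¹
  let z : Fin (d + 1) → ℝ := fun k => a * w k
  Matrix.of fun i j =>
    if i = 0 then
      if j = 0 then a ^ d * S z 0 0
      else a ^ (d + 1) * S z 0 j - α * a ^ d * S z 0 0 * z j
    else
      if j = 0 then a ^ (d + 1) * S z i 0 - α * a ^ d * S z 0 0 * z i
      else a ^ (d + 2) * S z i j
        - α * a ^ (d + 1) * (S z i 0 * z j + z i * S z 0 j)
        + α ^ 2 * a ^ d * S z 0 0 * z i * z j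

open Topology

section Divergence

variable {𝕜 ι : Type*} [NontriviallyNormedField 𝕜] [Fintype ι] [DecidableEq ι]
  {V W : (ι → 𝕜) → ι → 𝕜} {z : ι → 𝕜}

noncomputable def divergence (V : (ι → 𝕜) → ι → 𝕜) (z : ι → 𝕜) : 𝕜 :=
  ∑ j, fderiv 𝕜 (fun w => V w j) z (Pi.single j 1)

theorem HasFDerivAt.divergence_eq {L : (ι → 𝕜) →L[𝕜] ι → 𝕜} (h : HasFDerivAt V L z) :
    divergence V z = ∑ j, L (Pi.single j 1) j := by
  unfold divergence
  congr! with j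
  rw [(hasFDerivAt_pi'.1 h j).fderiv]
  rfl

theorem Filter.EventuallyEq.divergence_eq (h : V =ᶠ[𝓝 z] W) :
    divergence V z = divergence W z := by
  unfold divergence
  congr! 2 with j
  exact Filter.EventuallyEq.fderiv_eq (h.mono fun w hw => congrFun hw j)

theorem ContinuousLinearMap.sum_apply_single_mul (f : (ι → 𝕜) →L[𝕜] 𝕜) (v : ι → 𝕜) :
    ∑ j, f (Pi.single j 1) * v j = f v := by
  conv_rhs => rw [pi_eq_sum_univ' v]
  simp [mul_comm]

theorem divergence_sub (hV : DifferentiableAt 𝕜 V z) (hW : DifferentiableAt 𝕜 W z) :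
    divergence (fun w => V w - W w) z = divergence V z - divergence W z := by
  rw [HasFDerivAt.divergence_eq (V := fun w => V w - W w) (hV.hasFDerivAt.sub hW.hasFDerivAt),
    hV.hasFDerivAt.divergence_eq, hW.hasFDerivAt.divergence_eq, ← Finset.sum_sub_distrib]
  rfl

theorem divergence_smul {g : (ι → 𝕜) → 𝕜} (hg : DifferentiableAt 𝕜 g z)
    (hV : DifferentiableAt 𝕜 V z) :
    divergence (fun w => g w • V w) z = g z * divergence V z + fderiv 𝕜 g z (V z) := by
  rw [HasFDerivAt.divergence_eq (V := fun w => g w • V w) (hg.hasFDerivAt.smul hV.hasFDerivAt),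
    hV.hasFDerivAt.divergence_eq, ← ContinuousLinearMap.sum_apply_single_mul, Finset.mul_sum,
    ← Finset.sum_add_distrib]
  simp

theorem divergence_fun_id : divergence (fun w : ι → 𝕜 => w) z = Fintype.card ι := by
  simp [HasFDerivAt.divergence_eq (V := fun w => w) (hasFDerivAt_id z)]

end Divergence

section Projective

variable {𝕜 : Type*} [NontriviallyNormedField 𝕜] {d : ℕ} (α : 𝕜) {w z : Fin (d + 1) → 𝕜}
  {V : (Fin (d + 1) → 𝕜) → Fin (d + 1) → 𝕜}

def projMap (w : Fin (d + 1) → 𝕜) : Fin (d + 1) → 𝕜 := (1 - α * w 0)⁻¹ • w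

theorem one_add_mul_projMap_apply_zero (hw : 1 - α * w 0 ≠ 0) :
    1 + α * projMap α w 0 = (1 - α * w 0)⁻¹ := by
  simp only [projMap, Pi.smul_apply, smul_eq_mul]
  field_simp
  ring

theorem hasFDerivAt_inv_one_sub_mul_pow (k : ℕ) (hw : 1 - α * w 0 ≠ 0) :
    HasFDerivAt (fun w : Fin (d + 1) → 𝕜 => (1 - α * w 0)⁻¹ ^ k)
      ((k * α * (1 - α * w 0)⁻¹ ^ (k + 1)) •
        ContinuousLinearMap.proj (R := 𝕜) (φ := fun _ : Fin (d + 1) => 𝕜) 0) w := by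
  have h := ((((hasDerivAt_id' (w 0)).const_mul α).const_sub 1).fun_inv hw).fun_pow k
  refine (h.congr_deriv ?_).comp_hasFDerivAt (f := fun w : Fin (d + 1) → 𝕜 => w 0) w
    (hasFDerivAt_apply 0 w)
  rcases k with _ | k
  · simp
  · simp only [add_tsub_cancel_right, div_eq_mul_inv, ← inv_pow]
    ring

theorem hasFDerivAt_projMap (hw : 1 - α * w 0 ≠ 0) :
    HasFDerivAt (projMap α) ((1 - α * w 0)⁻¹ • ContinuousLinearMap.id 𝕜 _ +
      ((α * (1 - α * w 0)⁻¹ ^ 2) •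
        ContinuousLinearMap.proj (R := 𝕜) (φ := fun _ : Fin (d + 1) => 𝕜) 0).smulRight w) w := by
  have h := (hasFDerivAt_inv_one_sub_mul_pow α 1 hw).smul (hasFDerivAt_id w)
  simp only [pow_one, Nat.cast_one, one_mul, one_add_one_eq_two] at h
  exact h

theorem divergence_comp_projMap (hw : 1 - α * w 0 ≠ 0)
    (hV : DifferentiableAt 𝕜 V (projMap α w)) :
    divergence (fun w => V (projMap α w)) w = (1 - α * w 0)⁻¹ * divergence V (projMap α w)
      + α * (1 - α * w 0)⁻¹ ^ 2 * fderiv 𝕜 (fun z => V z 0) (projMap α w) w := by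
  rw [HasFDerivAt.divergence_eq (V := fun w => V (projMap α w))
      (hV.hasFDerivAt.comp w (hasFDerivAt_projMap α hw)),
    hV.hasFDerivAt.divergence_eq, fderiv_apply hV 0]
  simp only [ContinuousLinearMap.comp_apply, _root_.add_apply, _root_.smul_apply,
    ContinuousLinearMap.smulRight_apply, ContinuousLinearMap.proj_apply,
    ContinuousLinearMap.id_apply, map_add, map_smul, Pi.add_apply, Pi.smul_apply, smul_eq_mul,
    Finset.sum_add_distrib, Finset.mul_sum]
  simp [Pi.single_apply]

/-- `z ↦ P(z) V(z)` with `P(z) = [[1, 0], [-α x, (1 + α t) I]]`, where `z = (t, x)`. -/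
def projTwist (V : (Fin (d + 1) → 𝕜) → Fin (d + 1) → 𝕜) (z : Fin (d + 1) → 𝕜) :
    Fin (d + 1) → 𝕜 :=
  (1 + α * z 0) • V z - (α * V z 0) • z

theorem projTwist_apply_zero : projTwist α V z 0 = V z 0 := by
  simp only [projTwist, Pi.sub_apply, Pi.smul_apply, smul_eq_mul]
  ring

theorem divergence_projTwist (hV : DifferentiableAt 𝕜 V z) :
    divergence (projTwist α V) z = (1 + α * z 0) * divergence V z - d * α * V z 0
      - α * fderiv 𝕜 (fun z => V z 0) z z := by
  have hg : DifferentiableAt 𝕜 (fun z : Fin (d + 1) → 𝕜 => 1 + α * z 0) z := by fun_prop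
  have hV₀ : DifferentiableAt 𝕜 (fun z => V z 0) z := by fun_prop
  unfold projTwist
  rw [divergence_sub (hg.fun_smul hV) ((hV₀.const_mul α).fun_smul differentiableAt_fun_id),
    divergence_smul hg hV, divergence_smul (hV₀.const_mul α) differentiableAt_fun_id,
    divergence_fun_id]
  simp [fderiv_const_mul hV₀, ((hasFDerivAt_apply (𝕜 := 𝕜) 0 z).const_mul α).fderiv]
  ring

/-- The Piola transform `det DΦ • DΦ⁻¹ (V ∘ Φ)` of `V` under `Φ = projMap α`. -/
def projPiola (V : (Fin (d + 1) → 𝕜) → Fin (d + 1) → 𝕜) (w : Fin (d + 1) → 𝕜) :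
    Fin (d + 1) → 𝕜 :=
  (1 - α * w 0)⁻¹ ^ d • projTwist α V (projMap α w)

theorem divergence_projPiola (hw : 1 - α * w 0 ≠ 0) (hV : DifferentiableAt 𝕜 V (projMap α w)) :
    divergence (projPiola α V) w = (1 - α * w 0)⁻¹ ^ (d + 2) * divergence V (projMap α w) := by
  have hU : DifferentiableAt 𝕜 (projTwist α V) (projMap α w) := by unfold projTwist; fun_prop
  have hΦ := hasFDerivAt_projMap α hw
  have hc := hasFDerivAt_inv_one_sub_mul_pow α d hw
  have hU₀ : (fun z => projTwist α V z 0) = fun z => V z 0 :=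
    funext fun _ => projTwist_apply_zero α
  have hlin : fderiv 𝕜 (fun z => V z 0) (projMap α w) (projMap α w)
      = (1 - α * w 0)⁻¹ * fderiv 𝕜 (fun z => V z 0) (projMap α w) w :=
    map_smul _ _ _
  unfold projPiola
  rw [divergence_smul (V := fun w => projTwist α V (projMap α w)) hc.differentiableAt
      (hU.comp w hΦ.differentiableAt),
    divergence_comp_projMap α hw hU, divergence_projTwist α hV, hU₀, hc.fderiv, hlin,
    one_add_mul_projMap_apply_zero α hw]
  simp only [_root_.smul_apply, ContinuousLinearMap.proj_apply, projTwist_apply_zero, smul_eq_mul]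
  generalize (1 - α * w 0)⁻¹ = a
  ring

/-- Row `i` of `P(z) S(z)`. -/
def projRow (S : (Fin (d + 1) → 𝕜) → Matrix (Fin (d + 1)) (Fin (d + 1)) 𝕜) (i : Fin (d + 1))
    (z : Fin (d + 1) → 𝕜) : Fin (d + 1) → 𝕜 :=
  (1 + α * z 0) • S z i - (α * z i) • S z 0

theorem divergence_projRow {S : (Fin (d + 1) → 𝕜) → Matrix (Fin (d + 1)) (Fin (d + 1)) 𝕜}
    {i : Fin (d + 1)} (hSi : DifferentiableAt 𝕜 (fun z => S z i) z)
    (hS₀ : DifferentiableAt 𝕜 (fun z => S z 0) z) :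
    divergence (projRow α S i) z = (1 + α * z 0) * divergence (fun z => S z i) z
      - α * z i * divergence (fun z => S z 0) z + α * (S z i 0 - S z 0 i) := by
  have hg : DifferentiableAt 𝕜 (fun z : Fin (d + 1) → 𝕜 => 1 + α * z 0) z := by fun_prop
  have hh : DifferentiableAt 𝕜 (fun z : Fin (d + 1) → 𝕜 => α * z i) z := by fun_prop
  unfold projRow
  rw [divergence_sub (hg.fun_smul hSi) (hh.fun_smul hS₀), divergence_smul hg hSi,
    divergence_smul hh hS₀]
  simp [((hasFDerivAt_apply (𝕜 := 𝕜) 0 z).const_mul α).fderiv,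
    ((hasFDerivAt_apply (𝕜 := 𝕜) i z).const_mul α).fderiv]
  ring

end Projective

theorem projTensor_eventuallyEq_projPiola {d : ℕ} {α : ℝ}
    (S : (Fin (d + 1) → ℝ) → Matrix (Fin (d + 1)) (Fin (d + 1)) ℝ) (i : Fin (d + 1))
    {w : Fin (d + 1) → ℝ} (hw : 1 - α * w 0 ≠ 0) :
    (fun w' => projTensor d α S w' i) =ᶠ[𝓝 w] projPiola α (projRow α S i) := by
  have hcont : Continuous fun w' : Fin (d + 1) → ℝ => 1 - α * w' 0 := by fun_prop
  filter_upwards [hcont.continuousAt.eventually_ne hw] with w' hw'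
  have hΦ : projMap α w' = fun k => (1 - α * w' 0)⁻¹ * w' k := rfl
  have ha : (1 - α * w' 0)⁻¹ * (1 - α * w' 0) = 1 := inv_mul_cancel₀ hw'
  funext j
  simp only [projTensor, Matrix.of_apply, projPiola, projTwist, projRow, hΦ, Pi.sub_apply,
    Pi.smul_apply, smul_eq_mul]
  generalize (1 - α * w' 0)⁻¹ = a at ha ⊢
  split_ifs <;> subst_vars <;> grind

theorem projTensor_divergenceFree_general (d : ℕ) (α : ℝ)
    (S : (Fin (d + 1) → ℝ) → Matrix (Fin (d + 1)) (Fin (d + 1)) ℝ)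
    (hS1 : ∀ i j, ContDiff ℝ 1 (fun z => S z i j))
    (hsym : ∀ z, (S z).IsSymm)
    (hdiv : ∀ z : Fin (d + 1) → ℝ, 0 < 1 + α * z 0 →
      ∀ i, ∑ j, fderiv ℝ (fun w => S w i j) z (Pi.single j 1) = 0) :
    ∀ w : Fin (d + 1) → ℝ, 0 < 1 - α * w 0 →
      ∀ i, ∑ j, fderiv ℝ (fun w' => projTensor d α S w' i j) w (Pi.single j 1) = 0 := by
  intro w hw i
  have hSi : Differentiable ℝ (fun z => S z i) :=
    differentiable_pi.2 fun j => (hS1 i j).differentiable one_ne_zero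
  have hS₀ : Differentiable ℝ (fun z => S z 0) :=
    differentiable_pi.2 fun j => (hS1 0 j).differentiable one_ne_zero
  have hz : 0 < 1 + α * projMap α w 0 := by
    rw [one_add_mul_projMap_apply_zero α hw.ne']
    exact inv_pos.2 hw
  have hdivS : ∀ k, divergence (fun z => S z k) (projMap α w) = 0 := hdiv _ hz
  have hrow : DifferentiableAt ℝ (projRow α S i) (projMap α w) := by unfold projRow; fun_prop
  change divergence (fun w' => projTensor d α S w' i) w = 0
  rw [(projTensor_eventuallyEq_projPiola S i hw.ne').divergence_eq,
    divergence_projPiola α hw.ne' hrow, divergence_projRow α (hSi _) (hS₀ _), hdivS, hdivS,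
    (hsym _).apply i 0]
  ring

/-- If `S` is a C¹ symmetric tensor which is Divergence-free on the region
`1 + t α > 0`, then its projective transform `S̄` is Divergence-free in the
new variables `(s, y)` on the region `1 - α s > 0`. -/
theorem projTensor_divergenceFree (d : ℕ) (α : ℝ) (hα : 0 < α)
    (S : (Fin (d + 1) → ℝ) → Matrix (Fin (d + 1)) (Fin (d + 1)) ℝ)
    (hS1 : ∀ i j, ContDiff ℝ 1 (fun z => S z i j))
    (hsym : ∀ z, (S z).IsSymm)
    (hdiv : ∀ z : Fin (d + 1) → ℝ, 0 < 1 + α * z 0 →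
      ∀ i, ∑ j, fderiv ℝ (fun w => S w i j) z (Pi.single j 1) = 0) :
    ∀ w : Fin (d + 1) → ℝ, 0 < 1 - α * w 0 →
      ∀ i, ∑ j, fderiv ℝ (fun w' => projTensor d α S w' i j) w (Pi.single j 1) = 0 :=
  projTensor_divergenceFree_general d α S hS1 hsym hdiv
end

section
/- With the notation of the projective transformation of a symmetric tensor: setting P = [[1, 0],[−αx, (1+tα)I_d]], one has S̄ = (1+tα)^d · P S Pᵀ. Consequently, if S(t,x) is positive semidefinite and 1+tα > 0, then S̄ is positive semidefinite, and det S̄ = (1+tα)^{d(d+1)+2d} det S = (1+tα)^{d(d+3)} det S. -/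
open Matrix

private lemma sum_two_aux {d : ℕ} (i : Fin (d + 1)) (hi : i ≠ 0)
    (f g : Fin (d + 1) → ℝ) :
    ∑ k, (if k = 0 then f k else if i = k then g k else 0) = f 0 + g i := by
  have h : ∀ k : Fin (d + 1),
      (if k = 0 then f k else if i = k then g k else 0)
        = (if k = 0 then f k else 0) + (if i = k then g k else 0) := by
    intro k
    by_cases hk : k = 0
    · subst hk; simp [hi]
    · by_cases hik : i = k <;> simp [hk, hik]
  simp_rw [h, Finset.sum_add_distrib]
  simp

private lemma psd_smul_aux {n : ℕ} {M : Matrix (Fin n) (Fin n) ℝ}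
    (h : M.PosSemidef) {c : ℝ} (hc : 0 ≤ c) : (c • M).PosSemidef := by
  refine ⟨?_, fun y => ?_⟩
  · unfold Matrix.IsHermitian
    rw [conjTranspose_smul]
    congr 1
    ext i j
    simpa using congrFun (congrFun h.1 i) j
  · have := smul_nonneg hc (h.2 y)
    simp only [smul_eq_mul, Finsupp.mul_sum] at this
    simp only [Matrix.smul_apply, smul_eq_mul]
    refine le_of_le_of_eq this ?_
    exact Finsupp.sum_congr fun i _ => Finsupp.sum_congr fun j _ => by ring

/-- With `a = 1 + t α`, `P = [[1, 0], [-α x, a I_d]]`, the projectively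
transformed tensor `S̄` (given blockwise) equals `a^d P S Pᵀ`; hence it is
positive semidefinite when `S` is and `a > 0`, and `det S̄ = a^(d(d+3)) det S`. -/
theorem projTensor_congruence (d : ℕ) (α t : ℝ) (x : Fin d → ℝ)
    (S : Matrix (Fin (d + 1)) (Fin (d + 1)) ℝ) (hsym : S.IsSymm) :
    let a : ℝ := 1 + t * α
    let X : Fin (d + 1) → ℝ := Fin.cons 0 x
    let P : Matrix (Fin (d + 1)) (Fin (d + 1)) ℝ :=
      Matrix.of fun i j =>
        if i = 0 then (if j = 0 then 1 else 0)
        else if j = 0 then -α * X i else (if i = j then a else 0)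
    let Sbar : Matrix (Fin (d + 1)) (Fin (d + 1)) ℝ :=
      Matrix.of fun i j =>
        if i = 0 then
          if j = 0 then a ^ d * S 0 0
          else a ^ (d + 1) * S 0 j - α * a ^ d * S 0 0 * X j
        else
          if j = 0 then a ^ (d + 1) * S i 0 - α * a ^ d * S 0 0 * X i
          else a ^ (d + 2) * S i j
            - α * a ^ (d + 1) * (S i 0 * X j + X i * S 0 j)
            + α ^ 2 * a ^ d * S 0 0 * X i * X j
    Sbar = a ^ d • (P * S * Pᵀ) ∧
      (S.PosSemidef → 0 < a → Sbar.PosSemidef) ∧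
      Sbar.det = a ^ (d * (d + 3)) * S.det := by
  intro a X P Sbar
  -- entries of S * Pᵀ
  have hQ : ∀ k j, (S * Pᵀ) k j
      = if j = 0 then S k 0 else a * S k j - α * X j * S k 0 := by
    intro k j
    by_cases hj : j = 0
    · subst hj
      simp [Matrix.mul_apply, P, mul_ite]
    · simp only [Matrix.mul_apply, Matrix.transpose_apply, P, Matrix.of_apply, hj,
        if_false, mul_ite, mul_zero, mul_one]
      rw [sum_two_aux j hj (fun l => S k l * (-α * X j)) (fun l => S k l * a)]
      simp [hj]
      ring
  have key : Sbar = a ^ d • (P * S * Pᵀ) := by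
    ext i j
    rw [Matrix.mul_assoc]
    set Q := S * Pᵀ with hQdef
    have h2 : (P * Q) i j
        = if i = 0 then Q 0 j
          else (-α * X i) * Q 0 j + a * Q i j := by
      by_cases hi : i = 0
      · subst hi
        simp [Matrix.mul_apply, P, ite_mul]
      · simp only [Matrix.mul_apply, P, Matrix.of_apply, hi, if_false, ite_mul, zero_mul]
        rw [sum_two_aux i hi (fun k => (-α * X i) * Q k j)
          (fun k => a * Q k j)]
    simp only [Matrix.smul_apply, h2, hQ, smul_eq_mul]
    by_cases hi : i = 0 <;> by_cases hj : j = 0 <;>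
      simp [Sbar, hi, hj, X, Fin.cons_zero] <;> ring
  refine ⟨key, fun hS ha => ?_, ?_⟩
  · rw [key]
    have hP : (P * S * Pᵀ).PosSemidef := by
      have := hS.mul_mul_conjTranspose_same P
      rw [conjTranspose_eq_transpose_of_trivial] at this
      simpa [Matrix.conjTranspose, Matrix.transpose] using this
    exact psd_smul_aux hP (by positivity)
  · have hdetP : P.det = a ^ d := by
      rw [Matrix.det_of_lowerTriangular P]
      · have : ∀ i : Fin (d + 1), P i i = if i = 0 then 1 else a := by
          intro i
          by_cases hi : i = 0 <;> simp [P, hi]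
        simp_rw [this]
        rw [Fin.prod_univ_succ]
        simp [Fin.succ_ne_zero]
      · intro i j hij
        have hij' : (i : Fin (d+1)) < j := hij
        have hi0 : ¬ (j = 0) := by
          intro h; subst h; exact absurd hij' (by simp [Fin.le_zero_iff, not_lt])
        by_cases hi : i = 0
        · simp [P, hi, hi0]
        · simp [P, hi, hi0, (ne_of_lt hij')]
    rw [key, Matrix.det_smul, Matrix.det_mul, Matrix.det_mul, Matrix.det_transpose, hdetP]
    rw [Fintype.card_fin, ← pow_mul]
    rw [show a ^ (d * (d + 1)) * (a ^ d * S.det * a ^ d)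
        = a ^ (d * (d + 1) + d + d) * S.det from by rw [pow_add, pow_add]; ring]
    rw [show d * (d + 1) + d + d = d * (d + 3) from by ring]
end

section
/- Let Σ : Γ → Sym(1+n) be a C¹ symmetric Divergence-free tensor on an open cone Γ ⊂ ℝ^(1+n), positively homogeneous of degree −n−1, written Σ(λ,z) = λ^{−n−1} [[h(z/λ), Z(z/λ)ᵀ],[Z(z/λ), H(z/λ)]] for λ > 0. Then the n×n symmetric tensor H̃(x) = H(x) − x⊗Z(x) − Z(x)⊗x + h(x) x⊗x satisfies Div_x H̃ = 0. -/
/-!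
On the slice `λ = 1`, Euler's identity for the degree `-(n+1)` homogeneous entries of `Σ` trades
`∂_λ` for `-(n+1) - x·∇_x`. Row `0` (transposed by symmetry) and row `i + 1` of `Div Σ = 0` thereby
become `div Z = x·∇h + (n+1) h` and `Div H = x·∇Z + (n+1) Z`, and the product rule turns
`Div H̃ᵢ` into `Div Hᵢ - (x·∇Zᵢ + (n+1) Zᵢ) - xᵢ (div Z - x·∇h - (n+1) h) = 0`.
-/

theorem fderiv_apply_self_of_homogeneous {E F : Type*} [NormedAddCommGroup E] [NormedSpace ℝ E]
    [NormedAddCommGroup F] [NormedSpace ℝ F] {f : E → F} {z : E} (hf : DifferentiableAt ℝ f z)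
    (k : ℕ) (hhom : ∀ c : ℝ, 0 < c → f (c • z) = (c ^ k)⁻¹ • f z) :
    fderiv ℝ f z z = -(k : ℝ) • f z := by
  have hray : HasDerivAt (fun c : ℝ => f (c • z)) (fderiv ℝ f z z) 1 := by
    have hf' : HasFDerivAt f (fderiv ℝ f z) ((1 : ℝ) • z) := by
      rw [one_smul]; exact hf.hasFDerivAt
    exact hf'.comp_hasDerivAt (1 : ℝ) (by simpa using (hasDerivAt_id (1 : ℝ)).smul_const z)
  have hpow : HasDerivAt (fun c : ℝ => (c ^ k)⁻¹ • f z) (-(k : ℝ) • f z) 1 := by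
    simpa using ((hasDerivAt_pow k (1 : ℝ)).inv (by simp)).smul_const (f z)
  refine hray.unique (hpow.congr_of_eventuallyEq ?_)
  filter_upwards [Ioi_mem_nhds one_pos] with c hc using hhom c hc

section Slice

variable {𝕜 F : Type*} [NontriviallyNormedField 𝕜] [NormedAddCommGroup F] [NormedSpace 𝕜 F]
  {n : ℕ} {f : (Fin (n + 1) → 𝕜) → F} {a : 𝕜} {x : Fin n → 𝕜}

theorem hasFDerivAt_finCons_const (a : 𝕜) (x : Fin n → 𝕜) :
    HasFDerivAt (fun y : Fin n → 𝕜 => (Fin.cons a y : Fin (n + 1) → 𝕜))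
      ((0 : (Fin n → 𝕜) →L[𝕜] 𝕜).finCons (.id 𝕜 _)) x :=
  (hasFDerivAt_const a x).finCons (hasFDerivAt_id x)

theorem DifferentiableAt.comp_finCons_const (hf : DifferentiableAt 𝕜 f (Fin.cons a x)) :
    DifferentiableAt 𝕜 (fun y => f (Fin.cons a y)) x :=
  hf.comp x (hasFDerivAt_finCons_const a x).differentiableAt

theorem fderiv_comp_finCons_const_apply (hf : DifferentiableAt 𝕜 f (Fin.cons a x))
    (v : Fin n → 𝕜) :
    fderiv 𝕜 (fun y => f (Fin.cons a y)) x v = fderiv 𝕜 f (Fin.cons a x) (Fin.cons 0 v) := by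
  have hcomp : HasFDerivAt (fun y => f (Fin.cons a y)) _ x :=
    hf.hasFDerivAt.comp x (hasFDerivAt_finCons_const a x)
  rw [hcomp.fderiv]
  rfl

theorem Fin.cons_zero_single (j : Fin n) :
    (Fin.cons 0 (Pi.single j 1) : Fin (n + 1) → 𝕜) = Pi.single j.succ 1 := by
  ext i
  refine Fin.cases ?_ (fun k => ?_) i
  · simp [(Fin.succ_ne_zero j).symm]
  · simp [Pi.single_apply, Fin.succ_inj]

end Slice

theorem sum_fderiv_slice_eq_of_homogeneous {n : ℕ} {σ : Fin (n + 1) → (Fin (n + 1) → ℝ) → ℝ}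
    {x : Fin n → ℝ} (m : ℕ) (hσ : ∀ J, DifferentiableAt ℝ (σ J) (Fin.cons 1 x))
    (hhom : ∀ c : ℝ, 0 < c → σ 0 (c • Fin.cons 1 x) = (c ^ m)⁻¹ • σ 0 (Fin.cons 1 x))
    (hdiv : ∑ J, fderiv ℝ (σ J) (Fin.cons 1 x) (Pi.single J 1) = 0) :
    ∑ k : Fin n, fderiv ℝ (fun y => σ k.succ (Fin.cons 1 y)) x (Pi.single k 1)
      = fderiv ℝ (fun y => σ 0 (Fin.cons 1 y)) x x + m * σ 0 (Fin.cons 1 x) := by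
  have hsplit : (Fin.cons 1 x : Fin (n + 1) → ℝ) = Pi.single 0 1 + Fin.cons 0 x := by
    ext i
    refine Fin.cases ?_ (fun k => ?_) i <;> simp
  have heuler : fderiv ℝ (σ 0) (Fin.cons 1 x) (Pi.single 0 1)
      + fderiv ℝ (fun y => σ 0 (Fin.cons 1 y)) x x = -m * σ 0 (Fin.cons 1 x) := by
    rw [fderiv_comp_finCons_const_apply (hσ 0), ← map_add, ← hsplit,
      fderiv_apply_self_of_homogeneous (hσ 0) m hhom, smul_eq_mul]
  rw [Fin.sum_univ_succ] at hdiv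
  have hsucc (k : Fin n) : fderiv ℝ (fun y => σ k.succ (Fin.cons 1 y)) x (Pi.single k 1)
      = fderiv ℝ (σ k.succ) (Fin.cons 1 x) (Pi.single k.succ 1) := by
    rw [fderiv_comp_finCons_const_apply (hσ _), Fin.cons_zero_single]
  simp only [hsucc]
  linarith

theorem ContinuousLinearMap.apply_eq_sum_mul_single {n : ℕ} (L : (Fin n → ℝ) →L[ℝ] ℝ)
    (x : Fin n → ℝ) : L x = ∑ j, x j * L (Pi.single j 1) := by
  conv_lhs => rw [pi_eq_sum_univ' x]
  simp [map_sum]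

theorem sum_fderiv_restriction_eq_zero {n : ℕ} {h : (Fin n → ℝ) → ℝ}
    {Z H : Fin n → (Fin n → ℝ) → ℝ} {x : Fin n → ℝ} (i : Fin n)
    (hh : DifferentiableAt ℝ h x) (hZ : ∀ j, DifferentiableAt ℝ (Z j) x)
    (hH : ∀ j, DifferentiableAt ℝ (H j) x)
    (hdivZ : ∑ j, fderiv ℝ (Z j) x (Pi.single j 1) = fderiv ℝ h x x + (n + 1) * h x)
    (hdivH : ∑ j, fderiv ℝ (H j) x (Pi.single j 1) = fderiv ℝ (Z i) x x + (n + 1) * Z i x) :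
    ∑ j, fderiv ℝ (fun y => H j y - y i * Z j y - Z i y * y j + h y * y i * y j) x
      (Pi.single j 1) = 0 := by
  have hterm (j : Fin n) :
      fderiv ℝ (fun y => H j y - y i * Z j y - Z i y * y j + h y * y i * y j) x (Pi.single j 1)
        = fderiv ℝ (H j) x (Pi.single j 1)
          - (x i * fderiv ℝ (Z j) x (Pi.single j 1) + if i = j then Z j x else 0)
          - (Z i x + x j * fderiv ℝ (Z i) x (Pi.single j 1))
          + (h x * x i + ((if i = j then x j * h x else 0)
            + x i * (x j * fderiv ℝ h x (Pi.single j 1)))) := by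
    have hd : HasFDerivAt (fun y => H j y - y i * Z j y - Z i y * y j + h y * y i * y j) _ x :=
      (((hH j).hasFDerivAt.sub ((hasFDerivAt_apply i x).mul (hZ j).hasFDerivAt)).sub
        ((hZ i).hasFDerivAt.mul (hasFDerivAt_apply j x))).add
        ((hh.hasFDerivAt.mul (hasFDerivAt_apply i x)).mul (hasFDerivAt_apply j x))
    rw [hd.fderiv]
    simp [Pi.single_apply, mul_left_comm (x j)]
  simp only [hterm, Finset.sum_add_distrib, Finset.sum_sub_distrib, Finset.sum_ite_eq,
    Finset.mem_univ, if_true, ← Finset.mul_sum, Finset.sum_const, Finset.card_univ,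
    Fintype.card_fin, nsmul_eq_mul, ← ContinuousLinearMap.apply_eq_sum_mul_single]
  linear_combination hdivH - x i * hdivZ

theorem restriction_divergenceFree_general (n : ℕ) (Γ : Set (Fin (n + 1) → ℝ))
    (hΓ : IsOpen Γ)
    (Sig : (Fin (n + 1) → ℝ) → Matrix (Fin (n + 1)) (Fin (n + 1)) ℝ)
    (hC1 : ∀ i j, ContDiffOn ℝ 1 (fun z => Sig z i j) Γ)
    (hsym : ∀ z ∈ Γ, (Sig z).IsSymm)
    (hhom : ∀ c : ℝ, 0 < c → ∀ z ∈ Γ, Sig (c • z) = (c ^ (n + 1))⁻¹ • Sig z)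
    (hdiv : ∀ z ∈ Γ, ∀ i, ∑ j, fderiv ℝ (fun w => Sig w i j) z (Pi.single j 1) = 0) :
    ∀ x : Fin n → ℝ, Fin.cons 1 x ∈ Γ → ∀ i : Fin n,
      ∑ j : Fin n, fderiv ℝ
        (fun y : Fin n → ℝ =>
          Sig (Fin.cons 1 y) i.succ j.succ
            - y i * Sig (Fin.cons 1 y) j.succ 0
            - Sig (Fin.cons 1 y) i.succ 0 * y j
            + Sig (Fin.cons 1 y) 0 0 * y i * y j)
        x (Pi.single j 1) = 0 := by
  intro x hx i
  have hdiff (I J : Fin (n + 1)) : DifferentiableAt ℝ (fun w => Sig w I J) (Fin.cons 1 x) :=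
    ((hC1 I J).differentiableOn one_ne_zero).differentiableAt (hΓ.mem_nhds hx)
  have hhom_entry (I J : Fin (n + 1)) (c : ℝ) (hc : 0 < c) :
      Sig (c • Fin.cons 1 x) I J = (c ^ (n + 1))⁻¹ • Sig (Fin.cons 1 x) I J := by
    rw [hhom c hc _ hx, Matrix.smul_apply]
  have hdiv_col : ∑ J, fderiv ℝ (fun w => Sig w J 0) (Fin.cons 1 x) (Pi.single J 1) = 0 := by
    refine (Finset.sum_congr rfl fun J _ => ?_).trans (hdiv _ hx 0)
    rw [Filter.EventuallyEq.fderiv_eq]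
    filter_upwards [hΓ.mem_nhds hx] with w hw using (hsym w hw).apply 0 J
  have hdivZ := sum_fderiv_slice_eq_of_homogeneous (σ := fun J w => Sig w J 0) (n + 1)
    (fun J => hdiff J 0) (hhom_entry 0 0) hdiv_col
  have hdivH := sum_fderiv_slice_eq_of_homogeneous (σ := fun J w => Sig w i.succ J) (n + 1)
    (hdiff i.succ) (hhom_entry i.succ 0) (hdiv _ hx i.succ)
  push_cast at hdivZ hdivH
  exact sum_fderiv_restriction_eq_zero i (hdiff 0 0).comp_finCons_const
    (fun j => (hdiff j.succ 0).comp_finCons_const)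
    (fun j => (hdiff i.succ j.succ).comp_finCons_const) hdivZ hdivH

/-- If `Σ` is a C¹ symmetric Divergence-free tensor on an open cone
`Γ ⊂ ℝ^(1+n)`, positively homogeneous of degree `-n-1`, with blocks
`h, Z, H` on the slice `λ = 1`, then
`H̃(x) = H(x) - x ⊗ Z(x) - Z(x) ⊗ x + h(x) x ⊗ x` is Divergence-free. -/
theorem restriction_divergenceFree (n : ℕ) (Γ : Set (Fin (n + 1) → ℝ))
    (hΓ : IsOpen Γ) (hcone : ∀ c : ℝ, 0 < c → ∀ z ∈ Γ, c • z ∈ Γ)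
    (Sig : (Fin (n + 1) → ℝ) → Matrix (Fin (n + 1)) (Fin (n + 1)) ℝ)
    (hC1 : ∀ i j, ContDiffOn ℝ 1 (fun z => Sig z i j) Γ)
    (hsym : ∀ z ∈ Γ, (Sig z).IsSymm)
    (hhom : ∀ c : ℝ, 0 < c → ∀ z ∈ Γ, Sig (c • z) = (c ^ (n + 1))⁻¹ • Sig z)
    (hdiv : ∀ z ∈ Γ, ∀ i, ∑ j, fderiv ℝ (fun w => Sig w i j) z (Pi.single j 1) = 0) :
    ∀ x : Fin n → ℝ, Fin.cons 1 x ∈ Γ → ∀ i : Fin n,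
      ∑ j : Fin n, fderiv ℝ
        (fun y : Fin n → ℝ =>
          Sig (Fin.cons 1 y) i.succ j.succ
            - y i * Sig (Fin.cons 1 y) j.succ 0
            - Sig (Fin.cons 1 y) i.succ 0 * y j
            + Sig (Fin.cons 1 y) 0 0 * y i * y j)
        x (Pi.single j 1) = 0 :=
  restriction_divergenceFree_general n Γ hΓ Sig hC1 hsym hhom hdiv
end

section
/- Let θ : ℝ^(1+d)∖{p} → ℝ be C¹ and positively homogeneous of degree 1 about the point p = (t₀, x₀), i.e. (t−t₀)∂_tθ + (x−x₀)·∇_xθ = θ. Let α > 0, and define θ̄(s,y) = (1−αs)θ(s/(1−αs), y/(1−αs)). Then θ̄ is positively homogeneous of degree 1 about the image point p̄ = (s₀,y₀) = (t₀/(1+t₀α), x₀/(1+t₀α)): (s−s₀)∂_sθ̄ + (y−y₀)·∇_yθ̄ = θ̄. -/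
/-! With `c = 1 - ℓ w` and `z = c⁻¹ • w`, the chain rule gives
`Dθ̄(w) v = Dθ(z) v + ℓ v * (Dθ(z) z - θ z)`. Euler's identity at `z` turns the bracket into
`Dθ(z) p`, and at `v = w - (1 + ℓ p)⁻¹ • p` the two terms combine to
`c * (Dθ(z) z - Dθ(z) p) = c * θ z`. -/

open ContinuousLinearMap

theorem ContinuousLinearMap.sum_mul_apply_single {R ι : Type*} [CommSemiring R]
    [TopologicalSpace R] [Fintype ι] [DecidableEq ι] (f : (ι → R) →L[R] R) (v : ι → R) :
    ∑ i, v i * f (Pi.single i 1) = f v := by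
  conv_rhs => rw [pi_eq_sum_univ' v, map_sum]
  simp only [map_smul, smul_eq_mul]

section Projective

variable {E : Type*} [NormedAddCommGroup E] [NormedSpace ℝ E]

/-- The paper's `θ̄`, with `ℓ = α • (time coordinate)`. -/
noncomputable def projectiveTransform (ℓ : E →L[ℝ] ℝ) (θ : E → ℝ) (w : E) : ℝ :=
  (1 - ℓ w) * θ ((1 - ℓ w)⁻¹ • w)

theorem hasFDerivAt_projectiveTransform {ℓ : E →L[ℝ] ℝ} {θ : E → ℝ} {w : E}
    {A : E →L[ℝ] ℝ} (hw : 1 - ℓ w ≠ 0) (hθ : HasFDerivAt θ A ((1 - ℓ w)⁻¹ • w)) :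
    HasFDerivAt (projectiveTransform ℓ θ)
      (A + (A ((1 - ℓ w)⁻¹ • w) - θ ((1 - ℓ w)⁻¹ • w)) • ℓ) w := by
  have hc : HasFDerivAt (fun w' => 1 - ℓ w') (0 - ℓ) w :=
    (hasFDerivAt_const (1 : ℝ) w).fun_sub ℓ.hasFDerivAt
  have hg := ((hasFDerivAt_inv hw).comp w hc).smul (hasFDerivAt_id w)
  refine (hc.mul (hθ.comp (f := fun w' => (1 - ℓ w')⁻¹ • w') w hg)).congr_fderiv ?_
  ext v
  simp only [Function.comp_apply, zero_sub, comp_neg, id_eq, comp_add, comp_smulₛₗ, map_inv₀,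
    Real.ringHom_apply, comp_id, smul_add, smul_neg, add_apply, smul_apply, smul_eq_mul, comp_apply,
    smulRight_apply, neg_apply, toSpanSingleton_apply, mul_neg, neg_neg, map_smul]
  field_simp
  ring

theorem fderiv_projectiveTransform_sub_smul {ℓ : E →L[ℝ] ℝ} {θ : E → ℝ} {w p : E}
    (hw : 1 - ℓ w ≠ 0) (hp : 1 + ℓ p ≠ 0) (hθ : DifferentiableAt ℝ θ ((1 - ℓ w)⁻¹ • w))
    (heuler : fderiv ℝ θ ((1 - ℓ w)⁻¹ • w) ((1 - ℓ w)⁻¹ • w - p) = θ ((1 - ℓ w)⁻¹ • w)) :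
    fderiv ℝ (projectiveTransform ℓ θ) w (w - (1 + ℓ p)⁻¹ • p) = projectiveTransform ℓ θ w := by
  rw [(hasFDerivAt_projectiveTransform hw hθ.hasFDerivAt).fderiv, projectiveTransform]
  simp only [map_sub, map_smul, smul_eq_mul, add_apply, smul_apply] at heuler ⊢
  rw [← heuler]
  field_simp
  ring

end Projective

theorem projective_preserves_homogeneity_general (d : ℕ) (α : ℝ)
    (p : Fin (d + 1) → ℝ) (hp : 0 < 1 + α * p 0)
    (θ : (Fin (d + 1) → ℝ) → ℝ)
    (hdiff : ∀ z : Fin (d + 1) → ℝ, z ≠ p → DifferentiableAt ℝ θ z)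
    (heuler : ∀ z : Fin (d + 1) → ℝ, z ≠ p →
      ∑ i, (z i - p i) * fderiv ℝ θ z (Pi.single i 1) = θ z) :
    ∀ w : Fin (d + 1) → ℝ, 0 < 1 - α * w 0 → (1 - α * w 0)⁻¹ • w ≠ p →
      ∑ i, (w i - (1 + α * p 0)⁻¹ * p i) *
          fderiv ℝ (fun w' => (1 - α * w' 0) * θ ((1 - α * w' 0)⁻¹ • w')) w
            (Pi.single i 1) =
        (1 - α * w 0) * θ ((1 - α * w 0)⁻¹ • w) := by
  intro w hw hwp
  have hℓ : ∀ v, (α • proj 0 : (Fin (d + 1) → ℝ) →L[ℝ] ℝ) v = α * v 0 := fun _ => rfl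
  have key := fderiv_projectiveTransform_sub_smul (ℓ := α • proj 0) (θ := θ) (w := w) (p := p)
  simp only [projectiveTransform, hℓ] at key
  rw [sum_mul_apply_single]
  exact key hw.ne' hp.ne' (hdiff _ hwp) ((sum_mul_apply_single _ (_ - p)).symm.trans (heuler _ hwp))

/-- If `θ` is positively homogeneous of degree 1 about `p = (t₀, x₀)`
(Euler identity), then `θ̄(s,y) = (1-αs) θ(s/(1-αs), y/(1-αs))` is positively
homogeneous of degree 1 about the image point `p̄ = p / (1 + α t₀)`. -/
theorem projective_preserves_homogeneity (d : ℕ) (α : ℝ) (hα : 0 < α)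
    (p : Fin (d + 1) → ℝ) (hp : 0 < 1 + α * p 0)
    (θ : (Fin (d + 1) → ℝ) → ℝ)
    (hdiff : ∀ z : Fin (d + 1) → ℝ, z ≠ p → DifferentiableAt ℝ θ z)
    (heuler : ∀ z : Fin (d + 1) → ℝ, z ≠ p →
      ∑ i, (z i - p i) * fderiv ℝ θ z (Pi.single i 1) = θ z) :
    ∀ w : Fin (d + 1) → ℝ, 0 < 1 - α * w 0 → (1 - α * w 0)⁻¹ • w ≠ p →
      ∑ i, (w i - (1 + α * p 0)⁻¹ * p i) *
          fderiv ℝ (fun w' => (1 - α * w' 0) * θ ((1 - α * w' 0)⁻¹ • w')) w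
            (Pi.single i 1) =
        (1 - α * w 0) * θ ((1 - α * w 0)⁻¹ • w) :=
  projective_preserves_homogeneity_general d α p hp θ hdiff heuler
end
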